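/- arXiv:2504.06790 — 4 statements merged into one kernel-verified Lean document; each statement's English description precedes it below -/
import Mathlib

section
/- For P ≥ 1, define Φ : ℂ^{P×P} → ℂ^{P×P} by [Φ(T)]_{i,k} = −T_{i,k} for i ≠ k and [Φ(T)]_{k,k} = Σ_{p=1}^{P} T_{p,k}, and define Ψ : ℂ^{P×P} → ℂ^{P×P} by [Ψ(Y)]_{i,k} = −Y_{i,k} for i ≠ k and [Ψ(Y)]_{k,k} = Σ_{p=1}^{P} Y_{p,k}. Then Ψ(Φ(T)) = T and Φ(Ψ(Y)) = Y for all T, Y ∈ ℂ^{P×P}; that is, Φ and Ψ are mutually inverse bijections, so the P² tunable admittance components can be adjusted to make the network admittance matrix equal to any prescribed complex matrix. -/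
open Matrix

/-- `Φ` maps the tunable admittance components `T` of the MiLAC circuit to the resulting
network admittance matrix: off-diagonal entries `−T i k`, diagonal entries `∑ p, T p k`. -/
noncomputable def componentsToAdmittance (P : ℕ) (T : Matrix (Fin P) (Fin P) ℂ) :
    Matrix (Fin P) (Fin P) ℂ :=
  Matrix.of fun i k => if i = k then ∑ p, T p k else -T i k

/-- `Ψ` maps a prescribed admittance matrix `Y` to the tunable admittance components
realizing it: off-diagonal `−Y i k`, diagonal `∑ p, Y p k`. -/
noncomputable def admittanceToComponents (P : ℕ) (Y : Matrix (Fin P) (Fin P) ℂ) :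
    Matrix (Fin P) (Fin P) ℂ :=
  Matrix.of fun i k => if i = k then ∑ p, Y p k else -Y i k

/-!
`Φ` and `Ψ` are the same map, and it is an involution: the `k`-th column of `Φ T` sums to
`T k k`, since its diagonal entry `∑ p, T p k` is cancelled by the negated off-diagonal
entries `-T i k` except for `T k k`. So applying `Φ` twice restores the diagonal from the
column sums and the off-diagonal entries by double negation.
-/

namespace Matrix

variable {n α : Type*} [Fintype n] [DecidableEq n] [AddCommGroup α]

def negOffDiagColSum (T : Matrix n n α) : Matrix n n α :=
  of fun i k => if i = k then ∑ p, T p k else -T i k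

theorem sum_negOffDiagColSum_apply (T : Matrix n n α) (k : n) :
    ∑ i, negOffDiagColSum T i k = T k k := by
  calc ∑ i, negOffDiagColSum T i k
      = ∑ i, ((Pi.single k (∑ p, T p k) : n → α) i - T i k +
          (Pi.single k (T k k) : n → α) i) := by
        refine Finset.sum_congr rfl fun i _ => ?_
        by_cases h : i = k
        · subst h; simp [negOffDiagColSum]
        · simp [negOffDiagColSum, h, sub_eq_neg_add]
    _ = T k k := by simp [Finset.sum_add_distrib]

theorem negOffDiagColSum_involutive :
    Function.Involutive (negOffDiagColSum : Matrix n n α → Matrix n n α) := by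
  intro T
  ext i k
  by_cases h : i = k
  · subst h
    simp only [negOffDiagColSum, of_apply, if_true]
    exact sum_negOffDiagColSum_apply T i
  · simp [negOffDiagColSum, h]

end Matrix

theorem componentsToAdmittance_eq_negOffDiagColSum (P : ℕ) :
    componentsToAdmittance P = negOffDiagColSum := rfl

theorem admittanceToComponents_eq_negOffDiagColSum (P : ℕ) :
    admittanceToComponents P = negOffDiagColSum := rfl

theorem milac_components_admittance_bijection_general (P : ℕ) :
    (∀ T : Matrix (Fin P) (Fin P) ℂ,
      admittanceToComponents P (componentsToAdmittance P T) = T) ∧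
    (∀ Y : Matrix (Fin P) (Fin P) ℂ,
      componentsToAdmittance P (admittanceToComponents P Y) = Y) ∧
    Function.Bijective (componentsToAdmittance P) ∧
    Function.Bijective (admittanceToComponents P) := by
  rw [componentsToAdmittance_eq_negOffDiagColSum, admittanceToComponents_eq_negOffDiagColSum]
  exact ⟨negOffDiagColSum_involutive, negOffDiagColSum_involutive,
    negOffDiagColSum_involutive.bijective, negOffDiagColSum_involutive.bijective⟩

/-- `Φ` and `Ψ` are mutually inverse bijections: the `P²` tunable admittance components can be
adjusted so that the network admittance matrix equals any prescribed complex matrix. -/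
theorem milac_components_admittance_bijection (P : ℕ) (hP : 1 ≤ P) :
    (∀ T : Matrix (Fin P) (Fin P) ℂ,
      admittanceToComponents P (componentsToAdmittance P T) = T) ∧
    (∀ Y : Matrix (Fin P) (Fin P) ℂ,
      componentsToAdmittance P (admittanceToComponents P Y) = Y) ∧
    Function.Bijective (componentsToAdmittance P) ∧
    Function.Bijective (admittanceToComponents P) :=
  milac_components_admittance_bijection_general P
end

section
/- Let H ∈ ℂ^{Y×X} and let C_x ∈ ℂ^{X×X} and C_n ∈ ℂ^{Y×Y} be Hermitian positive definite. Consider the block matrix P_LMMSE = [[C_n, H], [Hᴴ, −C_x⁻¹]] ∈ ℂ^{(Y+X)×(Y+X)} with blocks P₁₁ = C_n, P₁₂ = H, P₂₁ = Hᴴ, P₂₂ = −C_x⁻¹. Then P_LMMSE is invertible, its block P₁₁ is invertible, and the MiLAC output matrix satisfies (P₂₁·P₁₁⁻¹·P₁₂ − P₂₂)⁻¹·P₂₁·P₁₁⁻¹ = (Hᴴ·C_n⁻¹·H + C_x⁻¹)⁻¹·Hᴴ·C_n⁻¹, i.e., a MiLAC configured with P = P_LMMSE outputs the LMMSE estimator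 of x from the observation y = H·x + n applied at its input. -/
/-!
The Schur complement of the block `C_n` in `P_LMMSE` is `-(Hᴴ C_n⁻¹ H + C_x⁻¹)`, which is negative
definite, so `P_LMMSE` is invertible; the output identity is just `A - (-B) = A + B`.
-/

open Matrix ComplexOrder

namespace Matrix

variable {m n K : Type*} [Fintype m] [Fintype n] [DecidableEq m]
  [Field K] [PartialOrder K] [StarRing K] [StarOrderedRing K]

theorem PosDef.add_conjTranspose_mul_inv_mul {A : Matrix m m K} {D : Matrix n n K}
    (hA : A.PosDef) (hD : D.PosDef) (B : Matrix m n K) : (D + Bᴴ * A⁻¹ * B).PosDef :=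
  hD.add_posSemidef (hA.inv.posSemidef.conjTranspose_mul_mul_same B)

theorem PosDef.isUnit_fromBlocks_conjTranspose_neg [DecidableEq n] {A : Matrix m m K}
    {D : Matrix n n K} (hA : A.PosDef) (hD : D.PosDef) (B : Matrix m n K) :
    IsUnit (fromBlocks A B Bᴴ (-D)) := by
  let _ := hA.isUnit.invertible
  rw [isUnit_fromBlocks_iff_of_invertible₁₁, invOf_eq_nonsing_inv, ← neg_add']
  exact (hA.add_conjTranspose_mul_inv_mul hD B).isUnit.neg

end Matrix

theorem milac_computes_lmmse_form1_general (X Y : ℕ)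
    (H : Matrix (Fin Y) (Fin X) ℂ)
    (Cx : Matrix (Fin X) (Fin X) ℂ) (Cn : Matrix (Fin Y) (Fin Y) ℂ)
    (hCx : Cx.PosDef) (hCn : Cn.PosDef) :
    IsUnit (Matrix.fromBlocks Cn H Hᴴ (-Cx⁻¹)) ∧ IsUnit Cn ∧
    (Hᴴ * Cn⁻¹ * H - -Cx⁻¹)⁻¹ * Hᴴ * Cn⁻¹ = (Hᴴ * Cn⁻¹ * H + Cx⁻¹)⁻¹ * Hᴴ * Cn⁻¹ :=
  ⟨hCn.isUnit_fromBlocks_conjTranspose_neg hCx.inv H, hCn.isUnit, by rw [sub_neg_eq_add]⟩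

/-- A MiLAC configured with `P_LMMSE = [[C_n, H], [Hᴴ, −C_x⁻¹]]` outputs the LMMSE estimator:
`P_LMMSE` and its block `P₁₁ = C_n` are invertible, and
`(P₂₁·P₁₁⁻¹·P₁₂ − P₂₂)⁻¹·P₂₁·P₁₁⁻¹ = (Hᴴ·C_n⁻¹·H + C_x⁻¹)⁻¹·Hᴴ·C_n⁻¹`. -/
theorem milac_computes_lmmse_form1 (X Y : ℕ) (hX : 1 ≤ X) (hY : 1 ≤ Y)
    (H : Matrix (Fin Y) (Fin X) ℂ)
    (Cx : Matrix (Fin X) (Fin X) ℂ) (Cn : Matrix (Fin Y) (Fin Y) ℂ)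
    (hCx : Cx.PosDef) (hCn : Cn.PosDef) :
    IsUnit (Matrix.fromBlocks Cn H Hᴴ (-Cx⁻¹)) ∧ IsUnit Cn ∧
    (Hᴴ * Cn⁻¹ * H - -Cx⁻¹)⁻¹ * Hᴴ * Cn⁻¹ = (Hᴴ * Cn⁻¹ * H + Cx⁻¹)⁻¹ * Hᴴ * Cn⁻¹ :=
  milac_computes_lmmse_form1_general X Y H Cx Cn hCx hCn
end

section
/- Let Y ∈ ℂ^{P×P}, let Y₀ be a positive real number, and let u, v ∈ ℂ^P satisfy (Y/Y₀ + I_P)·v = u. Define the real 2P×2P matrix B̂ in blocks by B̂ = [[Re(Y) + Y₀·I_P, Im(Y) + Y₀·I_P], [−Im(Y) − Y₀·I_P, Re(Y) + Y₀·I_P]], where Re(Y) and Im(Y) denote the entrywise real and imaginary parts of Y. Then, viewing B̂ as a complex matrix, (i·B̂/Y₀ + I_{2P}) applied to the stacked vector (−i·v, v) ∈ ℂ^{2P} equals (u, i·u) ∈ ℂ^{2P}. Hence a MiLAC whose admittance matrix i·B̂ is purely imaginary (lossless) reproduces the input-output behavior of the MiLAC with complex admittance matrix Y. -/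
/-!
The real block matrix `[[A, B], [-B, A]]` maps `(-i w, w)` to `(-i Z w, Z w)`, where
`Z = A + i B`. Hence `i B̂ / Y₀ + I` maps `(-i v, v)` to `(x, i x)` with
`x = Z v / Y₀ - i v`, and for `Z = Y + Y₀ (1 + i) I` this `x` is `(Y / Y₀ + I) v = u`.
-/

open Matrix Complex

theorem Matrix.map_re_add_I_smul_map_im {m n : Type*} (Y : Matrix m n ℂ) :
    (Y.map re).map ofReal + I • (Y.map im).map ofReal = Y := by
  ext i j
  simp [mul_comm I]

theorem Matrix.fromBlocks_map_ofReal_mulVec_sumElim {m n : Type*} [Fintype n]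
    (A B : Matrix m n ℝ) (w : n → ℂ) :
    (fromBlocks A B (-B) A).map ofReal *ᵥ Sum.elim (-I • w) w =
      Sum.elim (-I • ((A.map ofReal + I • B.map ofReal) *ᵥ w))
        ((A.map ofReal + I • B.map ofReal) *ᵥ w) := by
  rw [fromBlocks_map, fromBlocks_mulVec]
  simp only [Sum.elim_comp_inl, Sum.elim_comp_inr, add_mulVec, smul_mulVec, mulVec_smul]
  congr 1
  · rw [smul_add, smul_smul, neg_mul, I_mul_I, neg_neg, one_smul]
  · rw [Matrix.map_neg _ ofReal_neg, neg_mulVec, smul_neg, neg_smul, neg_neg, add_comm]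

/-- A lossless MiLAC with purely imaginary admittance matrix `i·B̂`, where
`B̂ = [[Re Y + Y₀ I, Im Y + Y₀ I], [−Im Y − Y₀ I, Re Y + Y₀ I]]` is real, reproduces the
input-output behavior of the MiLAC with complex admittance matrix `Y`: if
`(Y/Y₀ + I)·v = u`, then `(i·B̂/Y₀ + I)` applied to `(−i·v, v)` equals `(u, i·u)`. -/
theorem milac_lossless_implementation (P : ℕ) (Y : Matrix (Fin P) (Fin P) ℂ)
    (Y₀ : ℝ) (hY₀ : 0 < Y₀) (u v : Fin P → ℂ)
    (hv : ((Y₀ : ℂ)⁻¹ • Y + 1).mulVec v = u) :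
    ((Complex.I * (Y₀ : ℂ)⁻¹) •
        ((Matrix.fromBlocks
            (Y.map Complex.re + Y₀ • 1) (Y.map Complex.im + Y₀ • 1)
            (-(Y.map Complex.im) - Y₀ • 1) (Y.map Complex.re + Y₀ • 1)).map
          ((↑) : ℝ → ℂ)) + 1).mulVec
      (Sum.elim (fun k => -Complex.I * v k) v) =
    Sum.elim u (fun k => Complex.I * u k) := by
  set Z := (Y.map re + Y₀ • 1).map ofReal + I • (Y.map im + Y₀ • 1).map ofReal
  have hZ : Z = Y + ((Y₀ : ℂ) * (1 + I)) • 1 := by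
    conv_rhs => rw [← Y.map_re_add_I_smul_map_im]
    ext i j
    simp only [Z, Matrix.add_apply, Matrix.smul_apply, map_apply, one_apply, smul_eq_mul]
    split_ifs <;> push_cast <;> ring
  have hZv : (Y₀ : ℂ)⁻¹ • (Z *ᵥ v) = u + I • v := by
    have hY₀' : (Y₀ : ℂ) ≠ 0 := ofReal_ne_zero.mpr hY₀.ne'
    rw [hZ, ← hv, add_mulVec, add_mulVec, smul_mulVec, smul_mulVec, one_mulVec, smul_add,
      smul_smul, ← mul_assoc, inv_mul_cancel₀ hY₀', one_mul, add_smul, one_smul, add_assoc]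
  have hx : Sum.elim (fun k => -I * v k) v = Sum.elim (-I • v) v := rfl
  rw [hx, ← neg_add', add_mulVec, smul_mulVec, one_mulVec, fromBlocks_map_ofReal_mulVec_sumElim]
  ext (k | k) <;> have hk := congrFun hZv k <;>
    simp only [Pi.smul_apply, Pi.add_apply, smul_eq_mul, Sum.elim_inl, Sum.elim_inr] at hk ⊢
  · linear_combination hk - (Y₀ : ℂ)⁻¹ * (Z *ᵥ v) k * I_sq
  · linear_combination I * hk + v k * I_sq
end

section
/- Let N, M ≥ 1, P = N + M, and Y₀ > 0 real. Let Y ∈ ℂ^{P×P} be partitioned into blocks Y₁₁ ∈ ℂ^{N×N}, Y₁₂ ∈ ℂ^{N×M}, Y₂₁ ∈ ℂ^{M×N}, Y₂₂ ∈ ℂ^{M×M}. Define the real 2P×2P matrix B̄ = [[B̄₁₁, B̄₁₂], [B̄₂₁, B̄₂₂]] where B̄₁₁ = [[Re(Y₁₁) + Y₀·I_N, Im(Y₁₁) + Y₀·I_N], [−Im(Y₁₁) − Y₀·I_N, Re(Y₁₁) + Y₀·I_N]], B̄₂₂ = [[Re(Y₂₂) + Y₀·I_M, Im(Y₂₂)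 + Y₀·I_M], [−Im(Y₂₂) − Y₀·I_M, Re(Y₂₂) + Y₀·I_M]], and B̄₁₂ = [[Re(Y₁₂), Im(Y₁₂)], [−Im(Y₁₂), Re(Y₁₂)]], B̄₂₁ = [[Re(Y₂₁), Im(Y₂₁)], [−Im(Y₂₁), Re(Y₂₁)]]. Let u ∈ ℂ^N, ũ = (u, 0_M) ∈ ℂ^P, and suppose v ∈ ℂ^P satisfies (Y/Y₀ + I_P)·v = ũ, with v = (v₁, v₂), v₁ ∈ ℂ^N, v₂ ∈ ℂ^M. Then (i·B̄/Y₀ + I_{2P}) applied to the stacked vector (−i·v₁, v₁, −i·v₂, v₂) ∈ ℂ^{2P} equals (u, i·u, 0, 0) ∈ ℂ^{2P}. -/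
/-!
`B̄` is, block by block, the real representation `[[Re A, Im A], [-Im A, Re A]]` of the blocks of
`A = Y + Y₀ (1 + i) I`; the shift `Y₀ (1 + i)` accounts for the extra `Y₀` entries. This
representation sends `(-i w, w)` to `(-i A w, A w)`, so `i B̄ / Y₀ + I` maps `(-i v, v)` to
`(A v / Y₀ - i v, i A v / Y₀ + v) = (Y v / Y₀ + v, i (Y v / Y₀ + v))` blockwise, and
`Y v / Y₀ + v = (u, 0)` is the hypothesis.
-/

open Matrix Complex

theorem Sum.smul_elim {α β γ R : Type*} [SMul R γ] (c : R) (f : α → γ) (g : β → γ) :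
    c • Sum.elim f g = Sum.elim (c • f) (c • g) := by
  ext (i | i) <;> rfl

section Realify

variable {m n o p : Type*}

def realify (A : Matrix m n ℂ) : Matrix (m ⊕ m) (n ⊕ n) ℝ :=
  fromBlocks (A.map re) (A.map im) (-A.map im) (A.map re)

theorem realify_add_smul_one [DecidableEq n] (A : Matrix n n ℂ) (c : ℂ) :
    realify (A + c • 1) =
      fromBlocks (A.map re + c.re • 1) (A.map im + c.im • 1)
        (-A.map im - c.im • 1) (A.map re + c.re • 1) := by
  ext (i | i) (j | j) <;> by_cases h : i = j <;>
    simp [realify, one_apply, h, sub_eq_add_neg, add_comm]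

theorem realify_map_ofReal_mulVec [Fintype n] (A : Matrix m n ℂ) (w : n → ℂ) :
    (realify A).map ofReal *ᵥ Sum.elim (-I • w) w = Sum.elim (-I • (A *ᵥ w)) (A *ᵥ w) := by
  set R : Matrix m n ℂ := A.map (fun z => (z.re : ℂ))
  set J : Matrix m n ℂ := A.map (fun z => (z.im : ℂ))
  have hA : A = R + I • J := by ext; simp [R, J, mul_comm I, re_add_im]
  have hR : (realify A).map ofReal = fromBlocks R J (-J) R := by
    ext (i | i) (j | j) <;> simp [realify, R, J]
  rw [hR, fromBlocks_mulVec, hA]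
  simp only [Sum.elim_comp_inl, Sum.elim_comp_inr, add_mulVec, smul_mulVec, mulVec_smul,
    neg_mulVec]
  congr 1 <;> match_scalars <;> simp

theorem fromBlocks_realify_map_ofReal_mulVec [Fintype n] [Fintype o] (A : Matrix m n ℂ)
    (B : Matrix m o ℂ) (C : Matrix p n ℂ) (D : Matrix p o ℂ) (x : n → ℂ) (y : o → ℂ) :
    (fromBlocks (realify A) (realify B) (realify C) (realify D)).map ofReal *ᵥ
        Sum.elim (Sum.elim (-I • x) x) (Sum.elim (-I • y) y) =
      Sum.elim (Sum.elim (-I • (A *ᵥ x + B *ᵥ y)) (A *ᵥ x + B *ᵥ y))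
        (Sum.elim (-I • (C *ᵥ x + D *ᵥ y)) (C *ᵥ x + D *ᵥ y)) := by
  simp only [fromBlocks_map, fromBlocks_mulVec, Sum.elim_comp_inl, Sum.elim_comp_inr,
    realify_map_ofReal_mulVec, Sum.elim_add_add, smul_add]

end Realify

theorem realified_port_response {ι : Type*} (r : ℂ) (hr : r ≠ 0) (s v u : ι → ℂ)
    (h : r⁻¹ • s + v = u) :
    (I * r⁻¹) • Sum.elim (-I • (s + (r * (1 + I)) • v)) (s + (r * (1 + I)) • v) +
        Sum.elim (-I • v) v =
      Sum.elim u (I • u) := by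
  subst h
  rw [Sum.smul_elim, ← Sum.elim_add_add]
  congr 1 <;> match_scalars <;> field_simp <;> ring_nf <;> simp

theorem milac_lossless_implementation_some_ports_general (N M : ℕ)
    (Y₀ : ℝ) (hY₀ : 0 < Y₀)
    (Y11 : Matrix (Fin N) (Fin N) ℂ) (Y12 : Matrix (Fin N) (Fin M) ℂ)
    (Y21 : Matrix (Fin M) (Fin N) ℂ) (Y22 : Matrix (Fin M) (Fin M) ℂ)
    (u v₁ : Fin N → ℂ) (v₂ : Fin M → ℂ)
    (hv : ((Y₀ : ℂ)⁻¹ • Matrix.fromBlocks Y11 Y12 Y21 Y22 + 1).mulVec (Sum.elim v₁ v₂) =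
      Sum.elim u 0) :
    ((Complex.I * (Y₀ : ℂ)⁻¹) •
        ((Matrix.fromBlocks
            (Matrix.fromBlocks (Y11.map Complex.re + Y₀ • 1) (Y11.map Complex.im + Y₀ • 1)
              (-(Y11.map Complex.im) - Y₀ • 1) (Y11.map Complex.re + Y₀ • 1))
            (Matrix.fromBlocks (Y12.map Complex.re) (Y12.map Complex.im)
              (-(Y12.map Complex.im)) (Y12.map Complex.re))
            (Matrix.fromBlocks (Y21.map Complex.re) (Y21.map Complex.im)
              (-(Y21.map Complex.im)) (Y21.map Complex.re))
            (Matrix.fromBlocks (Y22.map Complex.re + Y₀ • 1) (Y22.map Complex.im + Y₀ • 1)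
              (-(Y22.map Complex.im) - Y₀ • 1) (Y22.map Complex.re + Y₀ • 1))).map
          ((↑) : ℝ → ℂ)) + 1).mulVec
      (Sum.elim (Sum.elim (fun k => -Complex.I * v₁ k) v₁)
        (Sum.elim (fun k => -Complex.I * v₂ k) v₂)) =
    Sum.elim (Sum.elim u (fun k => Complex.I * u k)) 0 := by
  set c : ℂ := Y₀ * (1 + I)
  have hc : c.re = Y₀ ∧ c.im = Y₀ := by simp [c]
  have hB := fromBlocks_realify_map_ofReal_mulVec (Y11 + c • 1) Y12 Y21 (Y22 + c • 1) v₁ v₂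
  rw [realify_add_smul_one, realify_add_smul_one, hc.1, hc.2, realify, realify] at hB
  obtain ⟨h₁, h₂⟩ : (Y₀ : ℂ)⁻¹ • (Y11 *ᵥ v₁ + Y12 *ᵥ v₂) + v₁ = u ∧
      (Y₀ : ℂ)⁻¹ • (Y21 *ᵥ v₁ + Y22 *ᵥ v₂) + v₂ = 0 := by
    simpa only [add_mulVec, smul_mulVec, one_mulVec, fromBlocks_mulVec, Sum.elim_comp_inl,
      Sum.elim_comp_inr, Sum.smul_elim, ← Sum.elim_add_add, Sum.elim_eq_iff] using hv
  have hY : (Y₀ : ℂ) ≠ 0 := by exact_mod_cast hY₀.ne'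
  have hsmul : ∀ {ι : Type} (w : ι → ℂ), (fun k => -I * w k) = -I • w := fun _ => rfl
  rw [add_mulVec, smul_mulVec, one_mulVec, hsmul, hsmul, hB]
  have hp : (Y11 + c • 1) *ᵥ v₁ + Y12 *ᵥ v₂ = (Y11 *ᵥ v₁ + Y12 *ᵥ v₂) + c • v₁ := by
    rw [add_mulVec, smul_mulVec, one_mulVec]; abel
  have hq : Y21 *ᵥ v₁ + (Y22 + c • 1) *ᵥ v₂ = (Y21 *ᵥ v₁ + Y22 *ᵥ v₂) + c • v₂ := by
    rw [add_mulVec, smul_mulVec, one_mulVec]; abel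
  rw [hp, hq, Sum.smul_elim, ← Sum.elim_add_add, realified_port_response _ hY _ _ _ h₁,
    realified_port_response _ hY _ _ _ h₂, smul_zero, Sum.elim_zero_zero]
  rfl

/-- A lossless MiLAC with input on its first `2N` ports, whose real susceptance matrix `B̄`
is built blockwise from the blocks of `Y`, reproduces the behavior of the MiLAC with complex
admittance matrix `Y = [[Y₁₁, Y₁₂], [Y₂₁, Y₂₂]]` and input `ũ = (u, 0)`: if
`(Y/Y₀ + I)·(v₁, v₂) = (u, 0)`, then `(i·B̄/Y₀ + I)` applied to the stacked vector
`(−i·v₁, v₁, −i·v₂, v₂)` equals `(u, i·u, 0, 0)`. -/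
theorem milac_lossless_implementation_some_ports (N M : ℕ) (hN : 1 ≤ N) (hM : 1 ≤ M)
    (Y₀ : ℝ) (hY₀ : 0 < Y₀)
    (Y11 : Matrix (Fin N) (Fin N) ℂ) (Y12 : Matrix (Fin N) (Fin M) ℂ)
    (Y21 : Matrix (Fin M) (Fin N) ℂ) (Y22 : Matrix (Fin M) (Fin M) ℂ)
    (u v₁ : Fin N → ℂ) (v₂ : Fin M → ℂ)
    (hv : ((Y₀ : ℂ)⁻¹ • Matrix.fromBlocks Y11 Y12 Y21 Y22 + 1).mulVec (Sum.elim v₁ v₂) =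
      Sum.elim u 0) :
    ((Complex.I * (Y₀ : ℂ)⁻¹) •
        ((Matrix.fromBlocks
            (Matrix.fromBlocks (Y11.map Complex.re + Y₀ • 1) (Y11.map Complex.im + Y₀ • 1)
              (-(Y11.map Complex.im) - Y₀ • 1) (Y11.map Complex.re + Y₀ • 1))
            (Matrix.fromBlocks (Y12.map Complex.re) (Y12.map Complex.im)
              (-(Y12.map Complex.im)) (Y12.map Complex.re))
            (Matrix.fromBlocks (Y21.map Complex.re) (Y21.map Complex.im)
              (-(Y21.map Complex.im)) (Y21.map Complex.re))
            (Matrix.fromBlocks (Y22.map Complex.re + Y₀ • 1) (Y22.map Complex.im + Y₀ • 1)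
              (-(Y22.map Complex.im) - Y₀ • 1) (Y22.map Complex.re + Y₀ • 1))).map
          ((↑) : ℝ → ℂ)) + 1).mulVec
      (Sum.elim (Sum.elim (fun k => -Complex.I * v₁ k) v₁)
        (Sum.elim (fun k => -Complex.I * v₂ k) v₂)) =
    Sum.elim (Sum.elim u (fun k => Complex.I * u k)) 0 :=
  milac_lossless_implementation_some_ports_general N M Y₀ hY₀ Y11 Y12 Y21 Y22 u v₁ v₂ hv
end
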